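/- Let A : Matrix (Fin n) (Fin n) ℂ, let ψ, η : Matrix (Fin n) (Fin n) ℂ →ₗ[ℂ] Matrix (Fin n) (Fin n) ℂ with ψ completely positive and η co-completely positive, and suppose A * X * Aᴴ = ψ X + η X for all X. For i : Fin n let a i : Fin n → ℂ denote the i-th column of A (i.e. a i = fun r => A r i). Then for all i, j : Fin n: (a) if a i and a j are linearly dependent over ℂ, then there exists z : ℂ with η (E i j) = z • Matrix.vecMulVec (a i) (star (a i)); (b) if a i and a j are linearly independent over ℂ, then η (E i j) = 0. -/

import Mathlib

open Matrix ComplexOrder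

/-- `Φ` is completely positive: every blockwise application of `Φ` to a positive semidefinite
matrix on `ℂ^m ⊗ ℂ^n` yields a positive semidefinite matrix. -/
def IsCP (n : ℕ) (Φ : Matrix (Fin n) (Fin n) ℂ →ₗ[ℂ] Matrix (Fin n) (Fin n) ℂ) : Prop :=
  ∀ (m : ℕ) (A : Matrix (Fin m × Fin n) (Fin m × Fin n) ℂ), A.PosSemidef →
    (Matrix.of fun p q : Fin m × Fin n =>
      Φ (Matrix.of fun i' j' => A (p.1, i') (q.1, j')) p.2 q.2).PosSemidef

/-- Transposition (in the standard basis) as a linear map on matrices. -/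
def transpLM (n : ℕ) : Matrix (Fin n) (Fin n) ℂ →ₗ[ℂ] Matrix (Fin n) (Fin n) ℂ where
  toFun X := Xᵀ
  map_add' X Y := by simp
  map_smul' c X := by simp

/-- `Φ` is co-completely positive: `X ↦ Φ Xᵀ` is completely positive. -/
def IsCoCP (n : ℕ) (Φ : Matrix (Fin n) (Fin n) ℂ →ₗ[ℂ] Matrix (Fin n) (Fin n) ℂ) : Prop :=
  IsCP n (Φ ∘ₗ transpLM n)

/-!
The Choi matrix `[ψ (E s t)]_{s,t}` of `ψ` and the partially transposed Choi matrix
`[η (E t s)]_{s,t}` of `η` are positive semidefinite, and their diagonal blocks `ψ (E s s)` and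
`η (E s s)` add up to `a s (a s)ᴴ`. So for `x ⊥ a s` both quadratic forms vanish at `x`, and `x`
placed in block `s` lies in the kernel of both Choi matrices. Read off block by block, this says
that `η (E i j)` vanishes on `(a i)ᗮ` and that its range lies in `span (a i)` (because
`ψ (E i j) = a i (a j)ᴴ - η (E i j)`) and in `span (a j)`. Hence `η (E i j)` is a multiple of
`a i (a i)ᴴ`, and it vanishes when `a i` and `a j` are independent.
-/

section Orthogonality

variable {m : Type*} [Fintype m]

theorem star_sub_smul_dotProduct_self (u y : m → ℂ) :
    star (y - (star u ⬝ᵥ y / star u ⬝ᵥ u) • u) ⬝ᵥ u = 0 := by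
  rcases eq_or_ne u 0 with rfl | hu
  · simp
  have hN : star u ⬝ᵥ u ≠ 0 := mt dotProduct_star_self_eq_zero.mp hu
  rw [star_sub, star_smul, sub_dotProduct, smul_dotProduct, star_div₀, ← star_dotProduct,
    ← star_dotProduct, smul_eq_mul, div_mul_cancel₀ _ hN, sub_self]

theorem exists_eq_smul_of_forall_orthogonal {u w : m → ℂ}
    (h : ∀ x, star x ⬝ᵥ u = 0 → star x ⬝ᵥ w = 0) : ∃ c : ℂ, w = c • u := by
  set c := star u ⬝ᵥ w / star u ⬝ᵥ u
  have hu : star (w - c • u) ⬝ᵥ u = 0 := star_sub_smul_dotProduct_self u w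
  have hw : star (w - c • u) ⬝ᵥ w = 0 := h _ hu
  -- `w - c • u` is orthogonal to both `u` and `w`, hence to itself
  have : w - c • u = 0 := by
    rw [← dotProduct_star_self_eq_zero, dotProduct_sub, dotProduct_smul, hu, hw]
    simp
  exact ⟨c, sub_eq_zero.mp this⟩

theorem exists_orthogonal_not_orthogonal {u v : m → ℂ} (h : LinearIndependent ℂ ![u, v]) :
    ∃ y, star y ⬝ᵥ v = 0 ∧ star y ⬝ᵥ u ≠ 0 := by
  by_contra! hy
  obtain ⟨c, rfl⟩ := exists_eq_smul_of_forall_orthogonal hy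
  exact (LinearIndependent.pair_iff.mp h) 1 (-c) (by simp) |>.1 |> one_ne_zero

theorem exists_eq_smul_vecMulVec_of_orthogonal {B : Matrix m m ℂ} {u : m → ℂ}
    (hker : ∀ x, star x ⬝ᵥ u = 0 → B *ᵥ x = 0)
    (hrange : ∀ x, star x ⬝ᵥ u = 0 → ∀ y, star x ⬝ᵥ (B *ᵥ y) = 0) :
    ∃ z : ℂ, B = z • vecMulVec u (star u) := by
  classical
  obtain ⟨d, hd⟩ := exists_eq_smul_of_forall_orthogonal fun x hx => hrange x hx u
  refine ⟨d / star u ⬝ᵥ u, ext_of_mulVec_single fun l => ?_⟩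
  set y : m → ℂ := Pi.single l 1
  have hy : B *ᵥ y = (star u ⬝ᵥ y / star u ⬝ᵥ u) • B *ᵥ u := by
    have := hker _ (star_sub_smul_dotProduct_self u y)
    rwa [mulVec_sub, mulVec_smul, sub_eq_zero] at this
  rw [hy, hd, smul_mulVec, vecMulVec_mulVec, op_smul_eq_smul, smul_smul, smul_smul]
  congr 1
  ring

theorem eq_zero_of_orthogonal_of_linearIndependent {B : Matrix m m ℂ} {u v : m → ℂ}
    (hker : ∀ x, star x ⬝ᵥ u = 0 → B *ᵥ x = 0)
    (hrange : ∀ x, star x ⬝ᵥ u = 0 → ∀ y, star x ⬝ᵥ (B *ᵥ y) = 0)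
    (hcorange : ∀ y, star y ⬝ᵥ v = 0 → ∀ x, star y ⬝ᵥ (B *ᵥ x) = 0)
    (huv : LinearIndependent ℂ ![u, v]) : B = 0 := by
  obtain ⟨z, rfl⟩ := exists_eq_smul_vecMulVec_of_orthogonal hker hrange
  obtain ⟨y, hyv, hyu⟩ := exists_orthogonal_not_orthogonal huv
  have hu : star u ⬝ᵥ u ≠ 0 := mt dotProduct_star_self_eq_zero.mp (huv.ne_zero 0)
  have h := hcorange y hyv u
  rw [smul_mulVec, vecMulVec_mulVec, op_smul_eq_smul, dotProduct_smul, dotProduct_smul,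
    smul_eq_mul, smul_eq_mul] at h
  rw [(mul_eq_zero.mp h).resolve_right (mul_ne_zero hu hyu), zero_smul]

theorem Matrix.PosSemidef.dotProduct_mulVec_eq_zero_of_add_eq_vecMulVec {P Q : Matrix m m ℂ}
    {a x : m → ℂ} (hP : P.PosSemidef) (hQ : Q.PosSemidef) (h : P + Q = vecMulVec a (star a))
    (hx : star x ⬝ᵥ a = 0) : star x ⬝ᵥ (P *ᵥ x) = 0 := by
  have hsum : star x ⬝ᵥ (P *ᵥ x) + star x ⬝ᵥ (Q *ᵥ x) = 0 := by
    rw [← dotProduct_add, ← add_mulVec, h, vecMulVec_mulVec, op_smul_eq_smul, dotProduct_smul,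
      hx, smul_zero]
  exact ((add_eq_zero_iff_of_nonneg (hP.dotProduct_mulVec_nonneg x)
    (hQ.dotProduct_mulVec_nonneg x)).mp hsum).1

end Orthogonality

section Choi

variable {ι : Type*} [DecidableEq ι]

def choiMatrix (Φ : Matrix ι ι ℂ →ₗ[ℂ] Matrix ι ι ℂ) : Matrix (ι × ι) (ι × ι) ℂ :=
  of fun p q => Φ (single p.1 q.1 1) p.2 q.2

variable {Φ : Matrix ι ι ℂ →ₗ[ℂ] Matrix ι ι ℂ}

theorem Matrix.PosSemidef.choiMatrix_diag_block (hC : (choiMatrix Φ).PosSemidef) (s : ι) :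
    (Φ (single s s 1)).PosSemidef :=
  hC.submatrix fun k => (s, k)

variable [Fintype ι]

theorem choiMatrix_mulVec_uncurry_single (t : ι) (y : ι → ℂ) :
    choiMatrix Φ *ᵥ Function.uncurry (Pi.single t y) =
      fun p => (Φ (single p.1 t 1) *ᵥ y) p.2 := by
  ext p
  simp [choiMatrix, mulVec, dotProduct, Fintype.sum_prod_type, Pi.single_apply, ite_apply,
    mul_ite, Finset.sum_ite_irrel]

theorem star_uncurry_single_dotProduct (s : ι) (x : ι → ℂ) (w : ι × ι → ℂ) :
    star (Function.uncurry (Pi.single s x)) ⬝ᵥ w = star x ⬝ᵥ fun k => w (s, k) := by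
  simp [dotProduct, Fintype.sum_prod_type, Pi.single_apply, ite_apply, apply_ite, ite_mul,
    Finset.sum_ite_irrel]

theorem Matrix.PosSemidef.choiMatrix_mulVec_uncurry_single_eq_zero
    (hC : (choiMatrix Φ).PosSemidef) {s : ι} {x : ι → ℂ}
    (hx : star x ⬝ᵥ (Φ (single s s 1) *ᵥ x) = 0) :
    choiMatrix Φ *ᵥ Function.uncurry (Pi.single s x) = 0 := by
  rw [← hC.dotProduct_mulVec_zero_iff, choiMatrix_mulVec_uncurry_single,
    star_uncurry_single_dotProduct]
  exact hx

theorem Matrix.PosSemidef.choiMatrix_block_mulVec_eq_zero (hC : (choiMatrix Φ).PosSemidef)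
    {s : ι} {x : ι → ℂ} (hx : star x ⬝ᵥ (Φ (single s s 1) *ᵥ x) = 0) (t : ι) :
    Φ (single t s 1) *ᵥ x = 0 := by
  ext k
  simpa [choiMatrix_mulVec_uncurry_single] using
    congrFun (hC.choiMatrix_mulVec_uncurry_single_eq_zero hx) (t, k)

theorem Matrix.PosSemidef.choiMatrix_dotProduct_block_mulVec_eq_zero
    (hC : (choiMatrix Φ).PosSemidef) {s : ι} {x : ι → ℂ}
    (hx : star x ⬝ᵥ (Φ (single s s 1) *ᵥ x) = 0) (t : ι) (y : ι → ℂ) :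
    star x ⬝ᵥ (Φ (single s t 1) *ᵥ y) = 0 := by
  have h := hC.choiMatrix_mulVec_uncurry_single_eq_zero hx
  -- the kernel of the Hermitian matrix `choiMatrix Φ` is orthogonal to its range
  have : star (Function.uncurry (Pi.single s x)) ⬝ᵥ
      (choiMatrix Φ *ᵥ Function.uncurry (Pi.single t y)) = 0 := by
    rw [dotProduct_mulVec, ← hC.1.eq, ← star_mulVec, h]
    simp
  rwa [choiMatrix_mulVec_uncurry_single, star_uncurry_single_dotProduct] at this

end Choi

theorem IsCP.posSemidef_choiMatrix {n : ℕ}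
    {Φ : Matrix (Fin n) (Fin n) ℂ →ₗ[ℂ] Matrix (Fin n) (Fin n) ℂ} (hΦ : IsCP n Φ) :
    (choiMatrix Φ).PosSemidef := by
  set ω : Fin n × Fin n → ℂ := fun p => (1 : Matrix (Fin n) (Fin n) ℂ) p.1 p.2
  have hblock (s t : Fin n) :
      (of fun k l => vecMulVec ω (star ω) (s, k) (t, l)) = single s t 1 := by
    ext k l
    by_cases s = k <;> by_cases t = l <;> simp [ω, vecMulVec_apply, one_apply, *]
  convert hΦ n _ (posSemidef_vecMulVec_self_star ω) using 1
  ext p q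
  rw [choiMatrix, of_apply, of_apply, hblock]

theorem transpLM_single {n : ℕ} (s t : Fin n) : transpLM n (single s t 1) = single t s 1 :=
  transpose_single s t 1

theorem mul_single_one_mul_conjTranspose {m ι α : Type*} [Fintype ι] [DecidableEq ι]
    [Semiring α] [StarRing α] (A : Matrix m ι α) (s t : ι) :
    A * single s t (1 : α) * Aᴴ = vecMulVec (fun r => A r s) (star fun r => A r t) := by
  ext k l
  simp [mul_apply, single_apply, vecMulVec_apply, ite_and, mul_ite, ite_mul]

/-- Key lemma on the structure of the Choi matrix of the co-CP summand `η` of a decomposition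
`A X Aᴴ = ψ X + η X` of an extreme CP map: with `a i` the `i`-th column of `A`,
if `a i` and `a j` are linearly dependent then `η (E i j)` is a multiple of `|a i⟩⟨a i|`,
and if they are linearly independent then `η (E i j) = 0`. -/
theorem choi_block_structure (n : ℕ) (A : Matrix (Fin n) (Fin n) ℂ)
    (ψ η : Matrix (Fin n) (Fin n) ℂ →ₗ[ℂ] Matrix (Fin n) (Fin n) ℂ)
    (hψ : IsCP n ψ) (hη : IsCoCP n η)
    (hsum : ∀ X : Matrix (Fin n) (Fin n) ℂ, A * X * Aᴴ = ψ X + η X)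
    (i j : Fin n) :
    (¬ LinearIndependent ℂ ![(fun r => A r i : Fin n → ℂ), (fun r => A r j : Fin n → ℂ)] →
      ∃ z : ℂ, η (Matrix.single i j 1)
        = z • Matrix.vecMulVec (fun r => A r i) (star (fun r => A r i))) ∧
    (LinearIndependent ℂ ![(fun r => A r i : Fin n → ℂ), (fun r => A r j : Fin n → ℂ)] →
      η (Matrix.single i j 1) = 0) := by
  have hCψ := hψ.posSemidef_choiMatrix
  have hCη := IsCP.posSemidef_choiMatrix hη
  have hη' (s t : Fin n) : (η ∘ₗ transpLM n) (single s t 1) = η (single t s 1) := by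
    rw [LinearMap.comp_apply, transpLM_single]
  have hblock (s t : Fin n) :
      ψ (single s t 1) + η (single s t 1) = vecMulVec (fun r => A r s) (star fun r => A r t) := by
    rw [← hsum, mul_single_one_mul_conjTranspose]
  have horth (s : Fin n) (x : Fin n → ℂ) (hx : star x ⬝ᵥ (fun r => A r s) = 0) :
      star x ⬝ᵥ (ψ (single s s 1) *ᵥ x) = 0 ∧
        star x ⬝ᵥ ((η ∘ₗ transpLM n) (single s s 1) *ᵥ x) = 0 := by
    have hCηs := hCη.choiMatrix_diag_block s
    rw [hη'] at hCηs ⊢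
    exact ⟨(hCψ.choiMatrix_diag_block s).dotProduct_mulVec_eq_zero_of_add_eq_vecMulVec hCηs
      (hblock s s) hx, hCηs.dotProduct_mulVec_eq_zero_of_add_eq_vecMulVec
      (hCψ.choiMatrix_diag_block s) ((add_comm _ _).trans (hblock s s)) hx⟩
  have hker (x) (hx : star x ⬝ᵥ (fun r => A r i) = 0) : η (single i j 1) *ᵥ x = 0 := by
    simpa only [hη'] using hCη.choiMatrix_block_mulVec_eq_zero (horth i x hx).2 j
  have hrange (x) (hx : star x ⬝ᵥ (fun r => A r i) = 0) (y) :
      star x ⬝ᵥ (η (single i j 1) *ᵥ y) = 0 := by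
    have h := hCψ.choiMatrix_dotProduct_block_mulVec_eq_zero (horth i x hx).1 j y
    rwa [eq_sub_of_add_eq (hblock i j), sub_mulVec, dotProduct_sub, vecMulVec_mulVec,
      op_smul_eq_smul, dotProduct_smul, hx, smul_zero, zero_sub, neg_eq_zero] at h
  have hcorange (y) (hy : star y ⬝ᵥ (fun r => A r j) = 0) (x) :
      star y ⬝ᵥ (η (single i j 1) *ᵥ x) = 0 := by
    simpa only [hη'] using hCη.choiMatrix_dotProduct_block_mulVec_eq_zero (horth j y hy).2 i x
  exact ⟨fun _ => exists_eq_smul_vecMulVec_of_orthogonal hker hrange,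
    eq_zero_of_orthogonal_of_linearIndependent hker hrange hcorange⟩
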